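/- arXiv:2303.11439 — 2 statements merged into one kernel-verified Lean document; each statement's English description precedes it below -/
import Mathlib

section
/- The Grushin (Baouendi–Grushin) operator applied to the gauge function satisfies 𝓛ρ = Δₓρ + |x|^{2α} ∂²_y ρ = (n+α)|Xρ|²/ρ at every point with x ≠ 0, where |Xρ|² = |x|^{2α}ρ^{-2α}. -/
/-!
Write `u = ρ ^ (2 * (α + 1)) = |x| ^ (2 * (α + 1)) + (α + 1) ^ 2 * y ^ 2`. Both second derivatives
in the statement are second derivatives of a power `s ↦ f s ^ p` of a positive function along a
line, so the second-order chain rule expresses them through `ρ / u`. Along the coordinate line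
`x + t • eᵢ` one has `|x + t • eᵢ| ^ 2 = |x| ^ 2 + 2 xᵢ t + t ^ 2`, so summing over `i` only uses
`∑ xᵢ ^ 2 = |x| ^ 2`; what remains is the identity `|x| ^ (2α) |x| ^ 2 + (α + 1) ^ 2 y ^ 2 = u`
together with `ρ ^ (-2α) = ρ ^ 2 / u`.
-/

open Real

/-- The Grushin gauge function. -/
noncomputable def rho (n : ℕ) (α : ℝ) (x : EuclideanSpace ℝ (Fin n)) (y : ℝ) : ℝ :=
  (‖x‖ ^ (2 * (α + 1)) + (α + 1) ^ 2 * y ^ 2) ^ (1 / (2 * (α + 1)))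

/-- The Euclidean Laplacian in x: sum of second directional derivatives along
coordinate directions. -/
noncomputable def lapx (n : ℕ) (f : EuclideanSpace ℝ (Fin n) → ℝ)
    (x : EuclideanSpace ℝ (Fin n)) : ℝ :=
  ∑ i : Fin n, iteratedDeriv 2 (fun t : ℝ => f (x + t • EuclideanSpace.single i 1)) 0

open Filter Topology

def HasSecondDerivAt (f f' : ℝ → ℝ) (f'' t : ℝ) : Prop :=
  (∀ᶠ s in 𝓝 t, HasDerivAt f (f' s) s) ∧ HasDerivAt f' f'' t

namespace HasSecondDerivAt

variable {f f' : ℝ → ℝ} {f'' t : ℝ}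

theorem deriv_deriv (h : HasSecondDerivAt f f' f'' t) : deriv (deriv f) t = f'' := by
  have hderiv : deriv f =ᶠ[𝓝 t] f' := h.1.mono fun _ hs => hs.deriv
  rw [hderiv.deriv_eq, h.2.deriv]

theorem iteratedDeriv_two (h : HasSecondDerivAt f f' f'' t) : iteratedDeriv 2 f t = f'' := by
  rw [iteratedDeriv_eq_iterate, Function.iterate_succ_apply', Function.iterate_one, h.deriv_deriv]

theorem add_const (h : HasSecondDerivAt f f' f'' t) (c : ℝ) :
    HasSecondDerivAt (fun s => f s + c) f' f'' t :=
  ⟨h.1.mono fun _ hs => hs.add_const c, h.2⟩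

theorem rpow_const (h : HasSecondDerivAt f f' f'' t) (hpos : 0 < f t) (p : ℝ) :
    HasSecondDerivAt (fun s => f s ^ p) (fun s => f' s * p * f s ^ (p - 1))
      (p * (p - 1) * f t ^ (p - 2) * f' t ^ 2 + p * f t ^ (p - 1) * f'') t := by
  have hcont : ContinuousAt f t := h.1.self_of_nhds.continuousAt
  refine ⟨?_, ?_⟩
  · filter_upwards [h.1, hcont.eventually (eventually_gt_nhds hpos)] with s hs hfs
    exact hs.rpow_const (Or.inl hfs.ne')
  · have hpow := h.1.self_of_nhds.rpow_const (p := p - 1) (Or.inl hpos.ne')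
    refine ((h.2.mul_const p).mul hpow).congr_deriv ?_
    rw [show p - 1 - 1 = p - 2 by ring]
    ring

end HasSecondDerivAt

theorem hasSecondDerivAt_quadratic (a b c t : ℝ) :
    HasSecondDerivAt (fun s => a + b * s + c * s ^ 2) (fun s => b + 2 * c * s) (2 * c) t := by
  refine ⟨Eventually.of_forall fun s => ?_, ?_⟩
  · refine ((((hasDerivAt_id s).const_mul b).const_add a).add
      ((hasDerivAt_pow 2 s).const_mul c)).congr_deriv ?_
    simp only [mul_one, Nat.cast_ofNat, Nat.add_one_sub_one, pow_one]
    ring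
  · simpa using ((hasDerivAt_id t).const_mul (2 * c)).const_add b

theorem rpow_two_mul {r : ℝ} (hr : 0 ≤ r) (a : ℝ) : r ^ (2 * a) = (r ^ 2) ^ a := by
  exact_mod_cast Real.rpow_natCast_mul hr 2 a

theorem norm_add_smul_single_sq {n : ℕ} (x : EuclideanSpace ℝ (Fin n)) (i : Fin n) (t : ℝ) :
    ‖x + t • EuclideanSpace.single i (1 : ℝ)‖ ^ 2 = ‖x‖ ^ 2 + 2 * x i * t + t ^ 2 := by
  rw [norm_add_sq_real, real_inner_smul_right, norm_smul, EuclideanSpace.inner_single_right,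
    PiLp.norm_single]
  simp only [ringHom_apply, one_mul, norm_eq_abs, norm_one, mul_one, sq_abs]
  ring

/-- `rhoPow n α x y` is `ρ(x, y) ^ (2 * (α + 1))`. -/
noncomputable def rhoPow (n : ℕ) (α : ℝ) (x : EuclideanSpace ℝ (Fin n)) (y : ℝ) : ℝ :=
  ‖x‖ ^ (2 * (α + 1)) + (α + 1) ^ 2 * y ^ 2

section Gauge

variable {n : ℕ} {α : ℝ} {x : EuclideanSpace ℝ (Fin n)} (y : ℝ)

theorem rho_eq_rhoPow_rpow : rho n α x y = rhoPow n α x y ^ (1 / (2 * (α + 1))) := rfl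

theorem rhoPow_pos (hx : x ≠ 0) : 0 < rhoPow n α x y := by
  have := norm_pos_iff.2 hx
  unfold rhoPow
  positivity

theorem rho_pos (hx : x ≠ 0) : 0 < rho n α x y :=
  Real.rpow_pos_of_pos (rhoPow_pos y hx) _

theorem rhoPow_rpow_sub_one (hx : x ≠ 0) :
    rhoPow n α x y ^ (1 / (2 * (α + 1)) - 1) = rho n α x y / rhoPow n α x y :=
  Real.rpow_sub_one (rhoPow_pos y hx).ne' _

theorem rhoPow_rpow_sub_two (hx : x ≠ 0) :
    rhoPow n α x y ^ (1 / (2 * (α + 1)) - 2) = rho n α x y / rhoPow n α x y ^ 2 := by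
  rw [show 1 / (2 * (α + 1)) - 2 = 1 / (2 * (α + 1)) - 1 - 1 by ring,
    Real.rpow_sub_one (rhoPow_pos y hx).ne', rhoPow_rpow_sub_one y hx, div_div, sq]

theorem rho_rpow_neg (hα : α + 1 ≠ 0) (hx : x ≠ 0) :
    rho n α x y ^ (-(2 * α)) = rho n α x y ^ 2 / rhoPow n α x y := by
  have hu := rhoPow_pos (α := α) y hx
  have hρu : rho n α x y ^ (2 * (α + 1)) = rhoPow n α x y := by
    rw [rho_eq_rhoPow_rpow, one_div, Real.rpow_inv_rpow hu.le (by positivity)]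
  rw [show -(2 * α) = 2 - 2 * (α + 1) by ring, Real.rpow_sub (rho_pos y hx), hρu, Real.rpow_two]

theorem iteratedDeriv_two_rho_line (hα : α + 1 ≠ 0) (hx : x ≠ 0) (i : Fin n) :
    iteratedDeriv 2 (fun t : ℝ => rho n α (x + t • EuclideanSpace.single i 1) y) 0
      = rho n α x y / rhoPow n α x y * ‖x‖ ^ (2 * α) * (1 + (2 * α / ‖x‖ ^ 2
          - (2 * α + 1) * ‖x‖ ^ (2 * α) / rhoPow n α x y) * x i ^ 2) := by
  have hr : 0 < ‖x‖ := norm_pos_iff.2 hx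
  have hline : (fun t : ℝ => rho n α (x + t • EuclideanSpace.single i 1) y)
      = fun t : ℝ => ((‖x‖ ^ 2 + 2 * x i * t + 1 * t ^ 2) ^ (α + 1) + (α + 1) ^ 2 * y ^ 2)
          ^ (1 / (2 * (α + 1))) := by
    funext t
    rw [rho, rpow_two_mul (norm_nonneg _), norm_add_smul_single_sq, one_mul]
  have hq := hasSecondDerivAt_quadratic (‖x‖ ^ 2) (2 * x i) 1 0
  have hq0 : ‖x‖ ^ 2 + 2 * x i * 0 + 1 * 0 ^ 2 = ‖x‖ ^ 2 := by ring
  have hG := (hq.rpow_const (by rw [hq0]; positivity) (α + 1)).add_const ((α + 1) ^ 2 * y ^ 2)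
  have hF := hG.rpow_const (by rw [hq0]; positivity) (1 / (2 * (α + 1)))
  rw [hline, hF.iteratedDeriv_two, hq0, ← rpow_two_mul hr.le, ← rhoPow, rhoPow_rpow_sub_one y hx,
    rhoPow_rpow_sub_two y hx]
  have hq2 : (0 : ℝ) < ‖x‖ ^ 2 := by positivity
  rw [add_sub_cancel_right, show α + 1 - 2 = α - 1 by ring, Real.rpow_sub_one hq2.ne',
    ← rpow_two_mul hr.le]
  have hu := rhoPow_pos (α := α) y hx
  -- otherwise `field_simp` merges this power with `‖x‖ ^ 2`
  generalize ‖x‖ ^ (2 * α) = s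
  field_simp
  ring

theorem deriv_deriv_rho_y (hα : α + 1 ≠ 0) (hx : x ≠ 0) :
    deriv (fun y' => deriv (fun y'' => rho n α x y'') y') y
      = rho n α x y / rhoPow n α x y
          * (α + 1 - (2 * α + 1) * (α + 1) ^ 2 * y ^ 2 / rhoPow n α x y) := by
  have hprofile : (fun y' => rho n α x y')
      = fun s => (‖x‖ ^ (2 * (α + 1)) + 0 * s + (α + 1) ^ 2 * s ^ 2) ^ (1 / (2 * (α + 1))) := by
    funext s
    rw [rho, zero_mul, add_zero]
  have hq := hasSecondDerivAt_quadratic (‖x‖ ^ (2 * (α + 1))) 0 ((α + 1) ^ 2) y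
  have hF := hq.rpow_const (by rw [zero_mul, add_zero]; exact rhoPow_pos y hx) (1 / (2 * (α + 1)))
  rw [hprofile, hF.deriv_deriv, zero_mul, add_zero, ← rhoPow, rhoPow_rpow_sub_one y hx,
    rhoPow_rpow_sub_two y hx]
  have hu := rhoPow_pos (α := α) y hx
  field_simp
  ring

theorem lapx_rho (hα : α + 1 ≠ 0) (hx : x ≠ 0) :
    lapx n (fun x' => rho n α x' y) x
      = rho n α x y / rhoPow n α x y * ‖x‖ ^ (2 * α)
          * (n + 2 * α - (2 * α + 1) * ‖x‖ ^ (2 * α) * ‖x‖ ^ 2 / rhoPow n α x y) := by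
  rw [lapx, Finset.sum_congr rfl fun i _ => iteratedDeriv_two_rho_line y hα hx i, ← Finset.mul_sum,
    Finset.sum_add_distrib, ← Finset.mul_sum, ← EuclideanSpace.real_norm_sq_eq]
  simp only [Finset.sum_const, Finset.card_univ, Fintype.card_fin, nsmul_eq_mul, mul_one]
  field_simp
  ring

end Gauge

theorem stmt_2 (n : ℕ) (α : ℝ) (hα : 0 < α)
    (x : EuclideanSpace ℝ (Fin n)) (y : ℝ) (hx : x ≠ 0) :
    lapx n (fun x' => rho n α x' y) x
        + ‖x‖ ^ (2 * α) * deriv (fun y' => deriv (fun y'' => rho n α x y'') y') y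
      = (n + α) * (‖x‖ ^ (2 * α) * (rho n α x y) ^ (-(2 * α))) / rho n α x y := by
  have hα1 : α + 1 ≠ 0 := by positivity
  have hr : 0 < ‖x‖ := norm_pos_iff.2 hx
  have hρ := rho_pos (α := α) y hx
  have hsplit : ‖x‖ ^ (2 * α) * ‖x‖ ^ 2 + (α + 1) ^ 2 * y ^ 2 = rhoPow n α x y := by
    rw [rhoPow, show 2 * (α + 1) = 2 * α + 2 by ring, Real.rpow_add hr, Real.rpow_two]
  rw [lapx_rho y hα1 hx, deriv_deriv_rho_y y hα1 hx, rho_rpow_neg y hα1 hx, ← hsplit]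
  field_simp
  ring
end

section
/- Let u ∈ C¹ on the closed unit ball of ℝⁿ satisfy (α+1)|u(x)| ≤ η|⟨x, ∇u(x)⟩| for all |x| ≤ 1, where α > 0 and η > 0. Then |u(x)| ≤ M |x|^{(α+1)/η} for all |x| ≤ 1, where M = max_{|x|=1}|u(x)|. -/
/-!
Along a ray `g t = u (t • z)`, `‖z‖ = 1`, the hypothesis reads `c |g t| ≤ t |g' t|` with
`c = (α + 1) / η`, and `g 0 = 0`. Hence `g'` vanishes only where `g` does, so by Darboux's theorem
`g'` has constant sign between the last zero of `g` and any point, and the mean value theorem shows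
that this sign is the sign of `g`: `g g' ≥ 0`. The hypothesis then becomes `c g² ≤ t g g'`, which
says that `g(t)² t^(-2c)` is nondecreasing; comparing with `t = 1` gives `|g t| ≤ |g 1| t^c`.
-/

open Set Real
open scoped RealInnerProductSpace Gradient

section OneDim

variable {g g' : ℝ → ℝ}

lemma self_mul_deriv_nonneg {a b : ℝ} (hg : ContinuousOn g (Icc a b))
    (hd : ∀ x ∈ Ioo a b, HasDerivAt g (g' x) x) (ha : g a = 0)
    (hzero : ∀ x ∈ Ioo a b, g' x = 0 → g x = 0) {x : ℝ} (hx : x ∈ Ioo a b) :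
    0 ≤ g x * g' x := by
  by_cases hgx : g x = 0
  · simp [hgx]
  have hclosed : IsClosed (Icc a x ∩ g ⁻¹' {0}) :=
    (hg.mono (Icc_subset_Icc_right hx.2.le)).preimage_isClosed_of_isClosed isClosed_Icc
      isClosed_singleton
  obtain ⟨a', ⟨⟨haa', ha'x⟩, hga'⟩, hlast⟩ :=
    (isCompact_Icc.of_isClosed_subset hclosed inter_subset_left).exists_isGreatest
      ⟨a, ⟨le_rfl, hx.1.le⟩, ha⟩
  rw [mem_preimage, mem_singleton_iff] at hga'
  replace ha'x : a' < x := ha'x.lt_of_ne (by rintro rfl; exact hgx hga')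
  have hIoc : Ioc a' x ⊆ Ioo a b := fun y hy => ⟨haa'.trans_lt hy.1, hy.2.trans_lt hx.2⟩
  have hne : ∀ y ∈ Ioc a' x, g' y ≠ 0 := fun y hy hy0 =>
    hy.1.not_ge (hlast ⟨⟨haa'.trans hy.1.le, hy.2⟩, hzero y (hIoc hy) hy0⟩)
  obtain ⟨ξ, hξ, hslope⟩ := exists_hasDerivAt_eq_slope g g' ha'x
    (hg.mono (Icc_subset_Icc haa' hx.2.le)) fun y hy => hd y (hIoc (Ioo_subset_Ioc_self hy))
  rw [hga', sub_zero, eq_div_iff (sub_ne_zero.2 ha'x.ne')] at hslope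
  have hξx : 0 < g' ξ * g' x := by
    rcases hasDerivWithinAt_forall_lt_or_forall_gt_of_forall_ne (convex_Ioc a' x)
      (fun y hy => (hd y (hIoc hy)).hasDerivWithinAt) hne with hneg | hpos
    · exact mul_pos_of_neg_of_neg (hneg ξ (Ioo_subset_Ioc_self hξ)) (hneg x ⟨ha'x, le_rfl⟩)
    · exact mul_pos (hpos ξ (Ioo_subset_Ioc_self hξ)) (hpos x ⟨ha'x, le_rfl⟩)
  rw [← hslope]
  nlinarith [sub_pos.2 ha'x]

lemma abs_le_abs_one_mul_rpow {c : ℝ} (hc : 0 < c) (hg : ContinuousOn g (Icc 0 1))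
    (hd : ∀ x ∈ Ioo 0 1, HasDerivAt g (g' x) x) (h0 : g 0 = 0)
    (hineq : ∀ x ∈ Ioo 0 1, c * |g x| ≤ x * |g' x|) {t : ℝ} (ht : t ∈ Icc 0 1) :
    |g t| ≤ |g 1| * t ^ c := by
  rcases ht.1.eq_or_lt with rfl | ht0
  · simp [h0, zero_rpow hc.ne']
  have hzero : ∀ x ∈ Ioo (0 : ℝ) 1, g' x = 0 → g x = 0 := fun x hx hx0 => by
    have := hineq x hx
    rw [hx0, abs_zero, mul_zero] at this
    exact abs_nonpos_iff.1 (nonpos_of_mul_nonpos_right this hc)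
  have hmul : ∀ x ∈ Ioo 0 1, c * g x ^ 2 ≤ x * (g x * g' x) := by
    intro x hx
    have := self_mul_deriv_nonneg hg hd h0 hzero hx
    calc c * g x ^ 2 = c * |g x| * |g x| := by rw [mul_assoc, abs_mul_abs_self, sq]
      _ ≤ x * |g' x| * |g x| := mul_le_mul_of_nonneg_right (hineq x hx) (abs_nonneg _)
      _ = x * (g x * g' x) := by rw [mul_assoc, ← abs_mul, mul_comm (g' x), abs_of_nonneg this]
  have hmono : MonotoneOn (fun x => g x * g x * x ^ (-(2 * c))) (Icc t 1) := by
    have hpos : ∀ x ∈ Icc t 1, x ≠ 0 := fun x hx => (ht0.trans_le hx.1).ne'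
    refine monotoneOn_of_hasDerivWithinAt_nonneg (convex_Icc t 1)
      (f' := fun x => (g' x * g x + g x * g' x) * x ^ (-(2 * c)) +
        g x * g x * (-(2 * c) * x ^ (-(2 * c) - 1))) ?_ ?_ ?_
    · have hg' := hg.mono (Icc_subset_Icc ht0.le le_rfl)
      exact (hg'.mul hg').mul fun x hx =>
        (continuousAt_rpow_const x _ (Or.inl (hpos x hx))).continuousWithinAt
    · rw [interior_Icc]
      intro x hx
      have hx' : x ∈ Ioo 0 1 := ⟨ht0.trans hx.1, hx.2⟩
      exact (((hd x hx').mul (hd x hx')).mul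
        (hasDerivAt_rpow_const (Or.inl hx'.1.ne'))).hasDerivWithinAt
    · rw [interior_Icc]
      intro x hx
      have hx' : x ∈ Ioo 0 1 := ⟨ht0.trans hx.1, hx.2⟩
      have hsplit : x ^ (-(2 * c)) = x ^ (-(2 * c) - 1) * x := by
        rw [← rpow_add_one hx'.1.ne', sub_add_cancel]
      have := rpow_pos_of_pos hx'.1 (-(2 * c) - 1)
      rw [hsplit]
      nlinarith [hmul x hx']
  have hψ := hmono ⟨le_rfl, ht.2⟩ ⟨ht.2, le_rfl⟩ ht.2
  simp only [one_rpow, mul_one] at hψ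
  have htc : 0 < t ^ c := rpow_pos_of_pos ht0 c
  have hsq : g t ^ 2 ≤ (|g 1| * t ^ c) ^ 2 := by
    have : t ^ (-(2 * c)) * (t ^ c) ^ 2 = 1 := by
      rw [← rpow_natCast, ← rpow_mul ht0.le, ← rpow_add ht0, Nat.cast_ofNat,
        neg_add_eq_zero.2 (mul_comm 2 c), rpow_zero]
    nlinarith [sq_abs (g 1), sq_nonneg (t ^ c)]
  simpa [abs_of_pos htc] using sq_le_sq.1 hsq

end OneDim

section RadialRestriction

variable {E : Type*} [NormedAddCommGroup E] [InnerProductSpace ℝ E] [CompleteSpace E]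

theorem HasGradientAt.hasDerivAt_comp_smul_const {u : E → ℝ} {v z : E} {t : ℝ}
    (h : HasGradientAt u v (t • z)) : HasDerivAt (fun s : ℝ => u (s • z)) ⟪v, z⟫ t := by
  have := h.hasFDerivAt.comp_hasDerivAt t ((hasDerivAt_id t).smul_const z)
  rwa [one_smul, InnerProductSpace.toDual_apply_apply] at this

theorem abs_apply_smul_le_mul_rpow {u : E → ℝ} {c : ℝ} (hc : 0 < c)
    (hu : DifferentiableOn ℝ u (Metric.closedBall 0 1))
    (hineq : ∀ x : E, ‖x‖ < 1 → c * |u x| ≤ |⟪x, ∇ u x⟫|) {z : E} (hz : ‖z‖ = 1) {t : ℝ}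
    (ht : t ∈ Icc 0 1) : |u (t • z)| ≤ |u z| * t ^ c := by
  have hnorm : ∀ s : ℝ, ‖s • z‖ = |s| := by simp [norm_smul, hz]
  have hu0 : u 0 = 0 := by
    have := hineq 0 (by simp)
    rw [inner_zero_left, abs_zero] at this
    exact abs_nonpos_iff.1 (nonpos_of_mul_nonpos_right this hc)
  have hdiff : ∀ s ∈ Ioo (0 : ℝ) 1, DifferentiableAt ℝ u (s • z) := fun s hs =>
    hu.differentiableAt (Metric.closedBall_mem_nhds_of_mem (by
      rw [mem_ball_zero_iff, hnorm, abs_of_pos hs.1]; exact hs.2))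
  simpa using abs_le_abs_one_mul_rpow (g := fun s => u (s • z))
    (g' := fun s => ⟪∇ u (s • z), z⟫) hc
    (hu.continuousOn.comp (by fun_prop) fun s hs => by
      rw [mem_closedBall_zero_iff, hnorm, abs_of_nonneg hs.1]; exact hs.2)
    (fun s hs => (hdiff s hs).hasGradientAt.hasDerivAt_comp_smul_const)
    (by simp [hu0])
    (fun s hs => by
      have := hineq (s • z) (by rw [hnorm, abs_of_pos hs.1]; exact hs.2)
      rwa [real_inner_smul_left, abs_mul, abs_of_pos hs.1, real_inner_comm] at this)
    ht

end RadialRestriction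

theorem stmt_8 (n : ℕ) (α η : ℝ) (hα : 0 < α) (hη : 0 < η)
    (u : EuclideanSpace ℝ (Fin n) → ℝ)
    (hu : ContDiffOn ℝ 1 u (Metric.closedBall 0 1))
    (hyp : ∀ x : EuclideanSpace ℝ (Fin n), ‖x‖ ≤ 1 →
      (α + 1) * |u x| ≤ η * |(inner ℝ x (gradient u x) : ℝ)|)
    (M : ℝ)
    (hM : IsGreatest {a : ℝ | ∃ z : EuclideanSpace ℝ (Fin n), ‖z‖ = 1 ∧ a = |u z|} M) :
    ∀ x : EuclideanSpace ℝ (Fin n), ‖x‖ ≤ 1 → |u x| ≤ M * ‖x‖ ^ ((α + 1) / η) := by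
  intro x hx
  obtain ⟨z₀, hz₀, -⟩ := hM.1
  obtain ⟨z, hz, hxz⟩ : ∃ z : EuclideanSpace ℝ (Fin n), ‖z‖ = 1 ∧ ‖x‖ • z = x := by
    rcases eq_or_ne x 0 with rfl | hx0
    · exact ⟨z₀, hz₀, by simp⟩
    · exact ⟨‖x‖⁻¹ • x, norm_smul_inv_norm hx0, smul_inv_smul₀ (norm_ne_zero_iff.2 hx0) x⟩
  have hineq : ∀ y : EuclideanSpace ℝ (Fin n), ‖y‖ < 1 →
      (α + 1) / η * |u y| ≤ |⟪y, ∇ u y⟫| := fun y hy => by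
    rw [div_mul_eq_mul_div, div_le_iff₀ hη, mul_comm _ η]
    exact hyp y hy.le
  have key := abs_apply_smul_le_mul_rpow (div_pos (by linarith) hη)
    (hu.differentiableOn one_ne_zero) hineq hz ⟨norm_nonneg x, hx⟩
  rw [hxz] at key
  exact key.trans (mul_le_mul_of_nonneg_right (hM.2 ⟨z, hz, rfl⟩) (rpow_nonneg (norm_nonneg x) _))
end
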